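/- Suppose the Markov kernel P satisfies PE(V, c, α, b, C). Then for every ξ ∈ (0,1] there exists b₁ ∈ (0,∞) such that P(V^ξ)(x) ≤ V(x)^ξ − cξ·V(x)^{α+ξ−1} + b₁·1_C(x) for all x ∈ 𝒳 (with the same set C appearing in the new drift condition). -/

import Mathlib

/-!
`t ↦ t ^ ξ` is concave for `ξ ∈ (0,1]`, so it lies below its tangent line at `s = V x`:
`t ^ ξ ≤ (1 - ξ) s ^ ξ + ξ s ^ (ξ - 1) t`. Integrating this against `P x` and inserting the drift
bound `PV(x) ≤ s - c s ^ α + b 1_C(x)` gives the claim with `b₁ = b`, because the slope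
`ξ s ^ (ξ - 1)` is at most `1` when `s ≥ 1`.
-/

open MeasureTheory ProbabilityTheory ENNReal Set

lemma rpow_le_tangent_line {ξ s t : ℝ} (hξ0 : 0 ≤ ξ) (hξ1 : ξ ≤ 1) (hs : 0 < s) (ht : 0 ≤ t) :
    t ^ ξ ≤ (1 - ξ) * s ^ ξ + ξ * s ^ (ξ - 1) * t := by
  have young : t ^ ξ * s ^ (1 - ξ) ≤ ξ * t + (1 - ξ) * s :=
    Real.geom_mean_le_arith_mean2_weighted hξ0 (sub_nonneg.2 hξ1) ht hs.le (by ring)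
  have hcancel : s ^ (1 - ξ) * s ^ (ξ - 1) = 1 := by
    rw [← Real.rpow_add hs]; norm_num
  have hs_mul : s * s ^ (ξ - 1) = s ^ ξ := by
    rw [mul_comm, Real.rpow_sub_one hs.ne', div_mul_cancel₀ _ hs.ne']
  calc t ^ ξ = t ^ ξ * s ^ (1 - ξ) * s ^ (ξ - 1) := by rw [mul_assoc, hcancel, mul_one]
    _ ≤ (ξ * t + (1 - ξ) * s) * s ^ (ξ - 1) := by gcongr
    _ = (1 - ξ) * (s * s ^ (ξ - 1)) + ξ * s ^ (ξ - 1) * t := by ring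
    _ = (1 - ξ) * s ^ ξ + ξ * s ^ (ξ - 1) * t := by rw [hs_mul]

section ProbabilityMeasure

variable {Ω : Type*} [MeasurableSpace Ω] (μ : Measure Ω) [IsProbabilityMeasure μ]

lemma one_le_of_lintegral_ofReal_le {f : Ω → ℝ} (hf : ∀ y, 1 ≤ f y) {r : ℝ}
    (h : ∫⁻ y, ENNReal.ofReal (f y) ∂μ ≤ ENNReal.ofReal r) : 1 ≤ r := by
  refine ENNReal.one_le_ofReal.1 (le_trans ?_ h)
  calc (1 : ℝ≥0∞) = ∫⁻ _, 1 ∂μ := by simp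
    _ ≤ ∫⁻ y, ENNReal.ofReal (f y) ∂μ :=
      lintegral_mono fun y => ENNReal.one_le_ofReal.2 (hf y)

lemma lintegral_ofReal_rpow_le_tangent_line {f : Ω → ℝ} (hf : ∀ y, 0 ≤ f y) {ξ s r : ℝ}
    (hξ0 : 0 ≤ ξ) (hξ1 : ξ ≤ 1) (hs : 0 < s) (hr : 0 ≤ r)
    (h : ∫⁻ y, ENNReal.ofReal (f y) ∂μ ≤ ENNReal.ofReal r) :
    ∫⁻ y, ENNReal.ofReal (f y ^ ξ) ∂μ
      ≤ ENNReal.ofReal ((1 - ξ) * s ^ ξ + ξ * s ^ (ξ - 1) * r) := by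
  have hA : 0 ≤ (1 - ξ) * s ^ ξ := mul_nonneg (sub_nonneg.2 hξ1) (by positivity)
  have hB : 0 ≤ ξ * s ^ (ξ - 1) := by positivity
  calc ∫⁻ y, ENNReal.ofReal (f y ^ ξ) ∂μ
      ≤ ∫⁻ y, (ENNReal.ofReal ((1 - ξ) * s ^ ξ)
          + ENNReal.ofReal (ξ * s ^ (ξ - 1)) * ENNReal.ofReal (f y)) ∂μ := by
        refine lintegral_mono fun y => ?_
        rw [← ENNReal.ofReal_mul hB, ← ENNReal.ofReal_add hA (mul_nonneg hB (hf y))]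
        exact ENNReal.ofReal_le_ofReal (rpow_le_tangent_line hξ0 hξ1 hs (hf y))
    _ = ENNReal.ofReal ((1 - ξ) * s ^ ξ)
          + ENNReal.ofReal (ξ * s ^ (ξ - 1)) * ∫⁻ y, ENNReal.ofReal (f y) ∂μ := by
        rw [lintegral_add_left measurable_const, lintegral_const_mul' _ _ ofReal_ne_top]
        simp
    _ ≤ ENNReal.ofReal ((1 - ξ) * s ^ ξ)
          + ENNReal.ofReal (ξ * s ^ (ξ - 1)) * ENNReal.ofReal r := by
        gcongr
    _ = ENNReal.ofReal ((1 - ξ) * s ^ ξ + ξ * s ^ (ξ - 1) * r) := by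
        rw [← ENNReal.ofReal_mul hB, ← ENNReal.ofReal_add hA (mul_nonneg hB hr)]

end ProbabilityMeasure

lemma tangent_line_at_drift_le {ξ s c α i : ℝ} (hξ1 : ξ ≤ 1) (hs : 1 ≤ s) (hi : 0 ≤ i) :
    (1 - ξ) * s ^ ξ + ξ * s ^ (ξ - 1) * (s - c * s ^ α + i)
      ≤ s ^ ξ - c * ξ * s ^ (α + ξ - 1) + i := by
  have hs0 : 0 < s := zero_lt_one.trans_le hs
  have hs_mul : s ^ (ξ - 1) * s = s ^ ξ := by
    rw [Real.rpow_sub_one hs0.ne', div_mul_cancel₀ _ hs0.ne']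
  have hs_add : s ^ (ξ - 1) * s ^ α = s ^ (α + ξ - 1) := by
    rw [← Real.rpow_add hs0]; ring_nf
  have slope_le_one : ξ * s ^ (ξ - 1) ≤ 1 :=
    mul_le_one₀ hξ1 (by positivity) (Real.rpow_le_one_of_one_le_of_nonpos hs (by linarith))
  calc (1 - ξ) * s ^ ξ + ξ * s ^ (ξ - 1) * (s - c * s ^ α + i)
      = s ^ ξ - c * ξ * s ^ (α + ξ - 1) + ξ * s ^ (ξ - 1) * i := by
        rw [← hs_add, ← hs_mul]; ring
    _ ≤ s ^ ξ - c * ξ * s ^ (α + ξ - 1) + i := by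
        gcongr
        exact mul_le_of_le_one_left hi slope_le_one

theorem stmt_2 {𝓧 : Type*} [MeasurableSpace 𝓧]
    (P : Kernel 𝓧 𝓧) [IsMarkovKernel P]
    (V : 𝓧 → ℝ) (hV1 : ∀ x, 1 ≤ V x)
    (c α b : ℝ) (hb : 0 < b)
    (C : Set 𝓧)
    (hPE : ∀ x, ∫⁻ y, ENNReal.ofReal (V y) ∂(P x)
      ≤ ENNReal.ofReal (V x - c * V x ^ α + C.indicator (fun _ => b) x))
    (ξ : ℝ) (hξ : ξ ∈ Set.Ioc (0 : ℝ) 1) :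
    ∃ b₁ : ℝ, 0 < b₁ ∧
      ∀ x, ∫⁻ y, ENNReal.ofReal (V y ^ ξ) ∂(P x)
        ≤ ENNReal.ofReal (V x ^ ξ - c * ξ * V x ^ (α + ξ - 1)
            + C.indicator (fun _ => b₁) x) := by
  obtain ⟨hξ0, hξ1⟩ := hξ
  refine ⟨b, hb, fun x => ?_⟩
  have hind : 0 ≤ C.indicator (fun _ => b) x := Set.indicator_nonneg (fun _ _ => hb.le) x
  have hr := one_le_of_lintegral_ofReal_le (P x) hV1 (hPE x)
  calc ∫⁻ y, ENNReal.ofReal (V y ^ ξ) ∂(P x)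
      ≤ ENNReal.ofReal ((1 - ξ) * V x ^ ξ
          + ξ * V x ^ (ξ - 1) * (V x - c * V x ^ α + C.indicator (fun _ => b) x)) :=
        lintegral_ofReal_rpow_le_tangent_line (P x) (fun y => zero_le_one.trans (hV1 y))
          hξ0.le hξ1 (zero_lt_one.trans_le (hV1 x)) (zero_le_one.trans hr) (hPE x)
    _ ≤ _ := ENNReal.ofReal_le_ofReal (tangent_line_at_drift_le hξ1 (hV1 x) hind)
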